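/- The two-normal-form transformation τ₂ preserves the generated language: for every CFG G, the language of τ₂(G) equals the language of G. -/

import Mathlib

/-! Formalization of Earley parsing and the Nederhof–Satta variant. -/

variable {T N : Type}

/-- A context-free grammar: a start nonterminal and a set of productions. -/
structure CFG (T N : Type) where
  initial : N
  rules : Set (N × List (Symbol T N))

/-- One rewriting step of the grammar. -/
def CFG.Produces (g : CFG T N) (u v : List (Symbol T N)) : Prop :=
  ∃ A α p q, (A, α) ∈ g.rules ∧ u = p ++ [Symbol.nonterminal A] ++ q ∧ v = p ++ α ++ q

/-- The derivation relation ⇒* (reflexive-transitive closure of rewriting). -/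
def CFG.Derives (g : CFG T N) : List (Symbol T N) → List (Symbol T N) → Prop :=
  Relation.ReflTransGen g.Produces

/-- The language of the grammar: { w | S ⇒* w }. -/
def CFG.language (g : CFG T N) : Set (List T) :=
  { w | g.Derives [Symbol.nonterminal g.initial] (w.map Symbol.terminal) }

/-- `inputSlice w i j` is the substring a_{i+1}⋯a_j of `w` (0-based: w[i..j)), as symbols. -/
def inputSlice (w : List T) (i j : ℕ) : List (Symbol T N) :=
  ((w.take j).drop i).map Symbol.terminal

/-- The least Earley table: `Earley g w A α β i j` means the dotted item
[A → α • β] is inserted in E_{i,j}. -/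
inductive Earley (g : CFG T N) (w : List T) :
    N → List (Symbol T N) → List (Symbol T N) → ℕ → ℕ → Prop where
  | init {α} : (g.initial, α) ∈ g.rules → Earley g w g.initial [] α 0 0
  | predict {B α A β i j γ} : Earley g w B α (Symbol.nonterminal A :: β) i j →
      (A, γ) ∈ g.rules → Earley g w A [] γ j j
  | scan {A α a β i j} : Earley g w A α (Symbol.terminal a :: β) i j →
      w[j]? = some a → Earley g w A (α ++ [Symbol.terminal a]) β i (j + 1)
  | complete {A α B β i k γ j} : Earley g w A α (Symbol.nonterminal B :: β) i k →
      Earley g w B γ [] k j → (B, γ) ∈ g.rules →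
      Earley g w A (α ++ [Symbol.nonterminal B]) β i j

mutual
  /-- Forward part of the variant: `VarU g w β j` means suffix item [β] ∈ U_j. -/
  inductive VarU (g : CFG T N) (w : List T) : List (Symbol T N) → ℕ → Prop where
    | init {α} : (g.initial, α) ∈ g.rules → VarU g w α 0
    | predict {A β j γ} : VarU g w (Symbol.nonterminal A :: β) j →
        (A, γ) ∈ g.rules → VarU g w γ j
    | scan {a β j} : VarU g w (Symbol.terminal a :: β) j → w[j]? = some a →
        VarU g w β (j + 1)
    | complete {B β k γ j} : VarU g w (Symbol.nonterminal B :: β) k → (B, γ) ∈ g.rules →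
        VarT g w γ k j → VarU g w β j

  /-- Backward part of the variant: `VarT g w β j m` means suffix item [β] ∈ T_{j,m}. -/
  inductive VarT (g : CFG T N) (w : List T) : List (Symbol T N) → ℕ → ℕ → Prop where
    | empty {m} : VarU g w [] m → VarT g w [] m m
    | scan {a β j m} : VarU g w (Symbol.terminal a :: β) j → w[j]? = some a →
        VarT g w β (j + 1) m → VarT g w (Symbol.terminal a :: β) j m
    | complete {B β k γ j m} : VarU g w (Symbol.nonterminal B :: β) k → (B, γ) ∈ g.rules →
        VarT g w γ k j → VarT g w β j m → VarT g w (Symbol.nonterminal B :: β) k m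
end

/-- Suffix items of G: suffixes of right-hand sides of productions. -/
def suffixItems (g : CFG T N) : Set (List (Symbol T N)) :=
  {β | ∃ A α, (A, α ++ β) ∈ g.rules}

/-- Embedding of symbols of G into symbols of τ₂(G). -/
def embSymbol : Symbol T N → Symbol T (N ⊕ List (Symbol T N))
  | Symbol.terminal a => Symbol.terminal a
  | Symbol.nonterminal A => Symbol.nonterminal (Sum.inl A)

/-- The two-normal-form transformation τ₂. -/
def tau2 (g : CFG T N) : CFG T (N ⊕ List (Symbol T N)) where
  initial := Sum.inl g.initial
  rules :=
    {r | (∃ A X α, (A, X :: α) ∈ g.rules ∧ 1 < α.length ∧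
            r = (Sum.inl A, [embSymbol X, Symbol.nonterminal (Sum.inr α)])) ∨
         (∃ A α, (A, α) ∈ g.rules ∧ α.length ≤ 2 ∧
            r = (Sum.inl A, α.map embSymbol)) ∨
         (∃ X α, (X :: α) ∈ suffixItems g ∧ 1 < α.length ∧
            r = (Sum.inr (X :: α), [embSymbol X, Symbol.nonterminal (Sum.inr α)])) ∨
         (∃ X Y, [X, Y] ∈ suffixItems g ∧
            r = (Sum.inr [X, Y], [embSymbol X, embSymbol Y]))}

/-!
Both inclusions transport derivations along a symbol substitution that sends every rule to a
derivation. From `G` to `τ₂(G)`, each symbol is replaced by its copy; a rule `A → X₁ ⋯ Xₙ` with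
`n > 2` is simulated by the chain `A ⇒ X₁ [X₂⋯Xₙ] ⇒ X₁ X₂ [X₃⋯Xₙ] ⇒ ⋯`. From `τ₂(G)` to `G`, a
suffix item `[β]` is replaced by the string `β` itself: then the rules of `τ₂(G)` for suffix items
become trivial, and those for `A` become rules of `G`.
-/

namespace CFG

variable {N' : Type} {g : CFG T N}

theorem Produces.append_context {u v : List (Symbol T N)} (h : g.Produces u v)
    (p q : List (Symbol T N)) : g.Produces (p ++ u ++ q) (p ++ v ++ q) := by
  obtain ⟨A, α, p', q', hr, rfl, rfl⟩ := h
  exact ⟨A, α, p ++ p', q' ++ q, hr, by simp, by simp⟩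

theorem Derives.append_context {u v : List (Symbol T N)} (h : g.Derives u v)
    (p q : List (Symbol T N)) : g.Derives (p ++ u ++ q) (p ++ v ++ q) :=
  Relation.ReflTransGen.lift (fun x => p ++ x ++ q) (fun _ _ hx => hx.append_context p q) _ _ h

theorem Derives.refl (u : List (Symbol T N)) : g.Derives u u :=
  Relation.ReflTransGen.refl

theorem Derives.trans {u v w : List (Symbol T N)} (huv : g.Derives u v) (hvw : g.Derives v w) :
    g.Derives u w :=
  Relation.ReflTransGen.trans huv hvw

theorem Derives.of_mem_rules {A : N} {α : List (Symbol T N)} (h : (A, α) ∈ g.rules) :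
    g.Derives [Symbol.nonterminal A] α :=
  .single ⟨A, α, [], [], h, by simp, by simp⟩

theorem Derives.flatMap {g' : CFG T N'} (f : Symbol T N → List (Symbol T N'))
    (hf : ∀ A α, (A, α) ∈ g.rules → g'.Derives (f (Symbol.nonterminal A)) (α.flatMap f))
    {u v : List (Symbol T N)} (h : g.Derives u v) :
    g'.Derives (u.flatMap f) (v.flatMap f) := by
  refine Relation.ReflTransGen.lift' (fun x => x.flatMap f) ?_ _ _ h
  rintro _ _ ⟨A, α, p, q, hr, rfl, rfl⟩
  show g'.Derives ((p ++ [_] ++ q).flatMap f) ((p ++ α ++ q).flatMap f)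
  simpa using (hf A α hr).append_context (p.flatMap f) (q.flatMap f)

theorem Derives.map {g' : CFG T N'} (f : Symbol T N → Symbol T N')
    (hf : ∀ A α, (A, α) ∈ g.rules → g'.Derives [f (Symbol.nonterminal A)] (α.map f))
    {u v : List (Symbol T N)} (h : g.Derives u v) : g'.Derives (u.map f) (v.map f) := by
  simp only [List.map_eq_flatMap] at hf ⊢
  exact h.flatMap _ hf

end CFG

section Tau2

variable {g : CFG T N}

theorem map_embSymbol_map_terminal (w : List T) :
    (w.map Symbol.terminal).map embSymbol =
      (w.map Symbol.terminal : List (Symbol T (N ⊕ List (Symbol T N)))) := by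
  simp only [List.map_map]
  rfl

theorem suffixItems_of_cons {X : Symbol T N} {β : List (Symbol T N)}
    (h : X :: β ∈ suffixItems g) : β ∈ suffixItems g := by
  obtain ⟨A, α, hA⟩ := h
  exact ⟨A, α ++ [X], by simpa using hA⟩

theorem tau2_derives_of_mem_suffixItems :
    ∀ {β : List (Symbol T N)}, β ∈ suffixItems g → 2 ≤ β.length →
      (tau2 g).Derives [Symbol.nonterminal (Sum.inr β)] (β.map embSymbol)
  | [X, Y], hβ, _ => .of_mem_rules (Or.inr (Or.inr (Or.inr ⟨X, Y, hβ, rfl⟩)))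
  | X :: Y :: Z :: β, hβ, _ => by
    have hstep : (tau2 g).Derives [Symbol.nonterminal (Sum.inr (X :: Y :: Z :: β))]
        [embSymbol X, Symbol.nonterminal (Sum.inr (Y :: Z :: β))] :=
      .of_mem_rules (Or.inr (Or.inr (Or.inl ⟨X, Y :: Z :: β, hβ, by simp, rfl⟩)))
    have htail := tau2_derives_of_mem_suffixItems (suffixItems_of_cons hβ) (by simp)
    simpa using hstep.trans (htail.append_context [embSymbol X] [])

theorem tau2_derives_of_mem_rules {A : N} {α : List (Symbol T N)} (h : (A, α) ∈ g.rules) :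
    (tau2 g).Derives [Symbol.nonterminal (Sum.inl A)] (α.map embSymbol) := by
  match α, h with
  | [], h | [_], h | [_, _], h => exact .of_mem_rules (Or.inr (Or.inl ⟨A, _, h, by simp, rfl⟩))
  | X :: Y :: Z :: β, h =>
    have hstep : (tau2 g).Derives [Symbol.nonterminal (Sum.inl A)]
        [embSymbol X, Symbol.nonterminal (Sum.inr (Y :: Z :: β))] :=
      .of_mem_rules (Or.inl ⟨A, X, Y :: Z :: β, h, by simp, rfl⟩)
    have htail := tau2_derives_of_mem_suffixItems (g := g) ⟨A, [X], h⟩ (by simp)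
    simpa using hstep.trans (htail.append_context [embSymbol X] [])

def unfoldSymbol : Symbol T (N ⊕ List (Symbol T N)) → List (Symbol T N)
  | Symbol.terminal a => [Symbol.terminal a]
  | Symbol.nonterminal (Sum.inl A) => [Symbol.nonterminal A]
  | Symbol.nonterminal (Sum.inr β) => β

@[simp]
theorem unfoldSymbol_inl (A : N) :
    unfoldSymbol (Symbol.nonterminal (Sum.inl A) : Symbol T (N ⊕ List (Symbol T N))) =
      [Symbol.nonterminal A] :=
  rfl

@[simp]
theorem unfoldSymbol_inr (β : List (Symbol T N)) :
    unfoldSymbol (Symbol.nonterminal (Sum.inr β)) = β :=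
  rfl

@[simp]
theorem unfoldSymbol_embSymbol (s : Symbol T N) : unfoldSymbol (embSymbol s) = [s] := by
  cases s <;> rfl

@[simp]
theorem flatMap_unfoldSymbol_map_embSymbol (α : List (Symbol T N)) :
    (α.map embSymbol).flatMap unfoldSymbol = α := by
  simp [List.flatMap_map]

theorem derives_unfoldSymbol_of_mem_tau2_rules {A : N ⊕ List (Symbol T N)}
    {α : List (Symbol T (N ⊕ List (Symbol T N)))} (h : (A, α) ∈ (tau2 g).rules) :
    g.Derives (unfoldSymbol (Symbol.nonterminal A)) (α.flatMap unfoldSymbol) := by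
  rcases h with ⟨B, X, β, hB, -, hr⟩ | ⟨B, β, hB, -, hr⟩ | ⟨X, β, -, -, hr⟩ | ⟨X, Y, -, hr⟩ <;>
    cases hr
  · simpa using CFG.Derives.of_mem_rules hB
  · simpa using CFG.Derives.of_mem_rules hB
  · simpa using CFG.Derives.refl (X :: β)
  · simpa using CFG.Derives.refl [X, Y]

end Tau2

/-- τ₂ preserves the generated language. -/
theorem tau2_language_eq (g : CFG T N) : (tau2 g).language = g.language := by
  ext w
  constructor
  · intro h
    have := CFG.Derives.flatMap unfoldSymbol (fun _ _ => derives_unfoldSymbol_of_mem_tau2_rules) h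
    rwa [← map_embSymbol_map_terminal, flatMap_unfoldSymbol_map_embSymbol] at this
  · intro h
    have := CFG.Derives.map embSymbol (fun _ _ => tau2_derives_of_mem_rules) h
    rwa [map_embSymbol_map_terminal] at this
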